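/- arXiv:2404.06806 — 3 statements merged into one kernel-verified Lean document; each statement's English description precedes it below -/
import Mathlib

section
/- Let p_k = max(β - σ²/λ_k, 0) be the water-filling allocation with water level β chosen so that Σ_{k=1}^K p_k = Q, and let n_k be the number of times index k is selected in Q steps of the ice-filling process (greedily incrementing the minimum of the levels σ²/λ_k + n_k^t). Then |n_k - p_k| < 1 for every k. -/
/-- Theorem 2: Let `p_k = (β - σ²/λ_k)⁺` be the water-filling allocation with
water level `β` chosen so that `∑ p_k = Q`, and let `n_k` be the number of times index `k`
is selected in `Q` steps of the ice-filling process (greedily incrementing the minimum of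
the levels `σ²/λ_k + n_k^t`). Then `|n_k - p_k| < 1` for every `k`. -/
theorem stmt4 {K Q : ℕ} (hK : 1 ≤ K) (hQ : 1 ≤ Q) (σ2 : ℝ) (hσ : 0 < σ2)
    (lam : Fin K → ℝ) (hpos : ∀ k, 0 < lam k)
    (hmono : ∀ j k : Fin K, j ≤ k → lam k ≤ lam j)
    (β : ℝ) (p : Fin K → ℝ) (hp : ∀ k, p k = max (β - σ2 / lam k) 0)
    (hsum : ∑ k, p k = (Q : ℝ))
    (sel : ℕ → Fin K) (n : Fin K → ℕ → ℕ)
    (hn0 : ∀ k, n k 0 = 0)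
    (hnupd : ∀ t, n (sel t) (t + 1) = n (sel t) t + 1)
    (hnkeep : ∀ t k, k ≠ sel t → n k (t + 1) = n k t)
    (hmin : ∀ t k, (n (sel t) t : ℝ) + σ2 / lam (sel t) ≤ (n k t : ℝ) + σ2 / lam k) :
    ∀ k, |(n k Q : ℝ) - p k| < 1 := by
  set c : Fin K → ℝ := fun k => σ2 / lam k with hc
  -- monotonicity
  have step : ∀ k t, n k t ≤ n k (t + 1) := by
    intro k t
    by_cases h : k = sel t
    · subst h; rw [hnupd]; omega
    · rw [hnkeep t k h]
  have mono : ∀ k, Monotone (n k) := fun k => monotone_nat_of_le_succ (step k)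
  -- constancy when no selection
  have const : ∀ (j : Fin K) (a b : ℕ), a ≤ b →
      (∀ s, a ≤ s → s < b → sel s ≠ j) → n j b = n j a := by
    intro j a b hab h
    induction b with
    | zero => have : a = 0 := Nat.le_zero.mp hab; rw [this]
    | succ b ih =>
      rcases eq_or_lt_of_le hab with h1 | h1
      · rw [h1]
      · have hb : a ≤ b := Nat.lt_succ_iff.mp h1
        have hne : j ≠ sel b := Ne.symm (h b hb (Nat.lt_succ_self b))
        rw [hnkeep b j hne, ih hb (fun s hs hsb => h s hs (Nat.lt_succ_of_lt hsb))]
  -- key inequality: levels at termination differ by at most 1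
  have key : ∀ j k : Fin K, 1 ≤ n j Q →
      (n j Q : ℝ) - 1 + c j ≤ (n k Q : ℝ) + c k := by
    intro j k hj
    have hex : ∃ t, t < Q ∧ sel t = j := by
      by_contra h
      push_neg at h
      have h0 : n j Q = n j 0 := const j 0 Q (Nat.zero_le Q) (fun s _ hs => h s hs)
      rw [hn0 j] at h0
      omega
    classical
    let P : ℕ → Prop := fun t => t < Q ∧ sel t = j
    obtain ⟨t0, ht0⟩ := hex
    set t := Nat.findGreatest P Q with ht
    have hPt : P t := Nat.findGreatest_spec (le_of_lt ht0.1) ht0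
    have hgr : ∀ s, t < s → s < Q → sel s ≠ j := by
      intro s hts hsQ heq
      exact Nat.findGreatest_is_greatest hts (le_of_lt hsQ) ⟨hsQ, heq⟩
    have hconst : n j Q = n j (t + 1) :=
      const j (t + 1) Q hPt.1 (fun s hs hsQ => hgr s (Nat.lt_of_succ_le hs) hsQ)
    have hupd : n j (t + 1) = n j t + 1 := by
      have := hnupd t; rwa [hPt.2] at this
    have hQv : n j Q = n j t + 1 := by rw [hconst, hupd]
    have hmin' : (n j t : ℝ) + c j ≤ (n k t : ℝ) + c k := by
      have := hmin t k; rwa [hPt.2] at this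
    have hle : (n k t : ℝ) ≤ (n k Q : ℝ) := by
      exact_mod_cast mono k (le_of_lt hPt.1)
    have : ((n j Q : ℕ) : ℝ) = (n j t : ℝ) + 1 := by rw [hQv]; push_cast; ring
    linarith
  -- total allocation
  have hsumn : ∀ t, ∑ k, n k t = t := by
    intro t
    induction t with
    | zero => simp [hn0]
    | succ t ih =>
      have heq : ∀ k : Fin K, n k (t + 1) = n k t + (if k = sel t then 1 else 0) := by
        intro k
        by_cases h : k = sel t
        · subst h; simp [hnupd t]
        · simp [h, hnkeep t k h]
      rw [Finset.sum_congr rfl (fun k _ => heq k), Finset.sum_add_distrib, ih]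
      simp
  have hsumr : ∑ k, (n k Q : ℝ) = (Q : ℝ) := by
    rw [← Nat.cast_sum, hsumn Q]
  -- main argument
  intro k
  rw [abs_lt]
  have hpk : p k = max (β - c k) 0 := hp k
  have hpge : ∀ j, β - c j ≤ p j := fun j => (hp j) ▸ le_max_left _ _
  have hpnn : ∀ j, 0 ≤ p j := fun j => (hp j) ▸ le_max_right _ _
  constructor
  · -- p k - n k Q < 1
    by_contra h
    push_neg at h
    have h1 : p k ≥ (n k Q : ℝ) + 1 := by linarith
    have hpk_pos : 0 < p k := by
      have : (0 : ℝ) ≤ (n k Q : ℝ) := Nat.cast_nonneg _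
      linarith
    have hpk_eq : p k = β - c k := by
      rw [hpk] at hpk_pos ⊢
      rcases max_cases (β - c k) 0 with ⟨he, _⟩ | ⟨he, _⟩
      · exact he
      · rw [he] at hpk_pos; linarith
    -- find j with n j Q > p j
    have hexj : ∃ j : Fin K, p j < (n j Q : ℝ) := by
      by_contra h2
      push_neg at h2
      have hlt : ∑ j, (n j Q : ℝ) < ∑ j, p j := by
        apply Finset.sum_lt_sum (fun i _ => h2 i) ⟨k, Finset.mem_univ k, by linarith⟩
      rw [hsumr, hsum] at hlt
      exact lt_irrefl _ hlt
    obtain ⟨j, hj⟩ := hexj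
    have hj1 : 1 ≤ n j Q := by
      rcases Nat.eq_zero_or_pos (n j Q) with h4 | h4
      · rw [h4] at hj; norm_num at hj; exact absurd hj (not_lt.mpr (hpnn j))
      · exact h4
    have hk := key j k hj1
    have := hpge j
    linarith
  · -- n k Q - p k < 1
    by_contra h
    push_neg at h
    have h1 : (n k Q : ℝ) ≥ p k + 1 := by linarith
    have hk1 : 1 ≤ n k Q := by
      have : (1 : ℝ) ≤ (n k Q : ℝ) := by
        have := hpnn k; linarith
      exact_mod_cast this
    -- find j with n j Q < p j
    have hexj : ∃ j : Fin K, (n j Q : ℝ) < p j := by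
      by_contra h2
      push_neg at h2
      have hlt : ∑ j, p j < ∑ j, (n j Q : ℝ) := by
        apply Finset.sum_lt_sum (fun i _ => h2 i) ⟨k, Finset.mem_univ k, by linarith⟩
      rw [hsumr, hsum] at hlt
      exact lt_irrefl _ hlt
    obtain ⟨j, hj⟩ := hexj
    have hpj_pos : 0 < p j := lt_of_le_of_lt (Nat.cast_nonneg _) hj
    have hpj_eq : p j = β - c j := by
      have := hp j
      rcases max_cases (β - c j) 0 with ⟨he, _⟩ | ⟨he, _⟩
      · rw [this, he]
      · rw [this, he] at hpj_pos; linarith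
    have hk := key k j hk1
    have := hpge k
    linarith
end

section
/- Let Σ_h = U_K Λ_K U_Kᴴ with U_Kᴴ U_K = I_K and Λ_K = diag(λ_1,...,λ_K), λ_k > 0. Let S ∈ {0,1}^{K×Q} be a selection matrix with exactly one 1 per column, and let n_k = number of 1's in row k, so S Sᴴ = diag(n_1,...,n_K). Then for W = U_K S, the trace of Σ_h - Σ_h W (Wᴴ Σ_h W + σ² I_Q)⁻¹ Wᴴ Σ_h equals Σ_{k=1}^K λ_k σ² / (n_k λ_k + σ²). -/
/-!
Since `Uᴴ U = I`, conjugating by `U` reduces the trace to that of the `K × K` matrix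
`Λ - Λ S (Sᴴ Λ S + σ² I)⁻¹ Sᴴ Λ`. The push-through identity
`S (Sᴴ Λ S + σ² I)⁻¹ = (S Sᴴ Λ + σ² I)⁻¹ S` (both inverses are genuine, the first matrix being
positive definite) turns this into `Λ - Λ (D Λ + σ² I)⁻¹ D Λ` with
`D = S Sᴴ = diag(n_k)`, a product of diagonal matrices whose `k`-th entry is
`λ_k σ² / (n_k λ_k + σ²)`.
-/

open Matrix

open scoped ComplexOrder

variable {m n p : Type*} [Fintype m] [Fintype n]

namespace Matrix

theorem trace_mul_mul_conjTranspose_of_conjTranspose_mul_self_eq_one {R : Type*}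
    [CommSemiring R] [StarRing R] [DecidableEq n] {U : Matrix m n R} (hU : Uᴴ * U = 1)
    (A : Matrix n n R) : (U * A * Uᴴ).trace = A.trace := by
  rw [trace_mul_cycle, hU, Matrix.one_mul]

theorem sub_mul_inv_mul_conj_of_conjTranspose_mul_self_eq_one {R : Type*} [CommRing R]
    [StarRing R] [Fintype p] [DecidableEq n] [DecidableEq p] {U : Matrix m n R}
    (hU : Uᴴ * U = 1) (Λ : Matrix n n R) (S : Matrix n p R) (B : Matrix p p R) :
    U * Λ * Uᴴ - U * Λ * Uᴴ * (U * S) * ((U * S)ᴴ * (U * Λ * Uᴴ) * (U * S) + B)⁻¹ *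
        (U * S)ᴴ * (U * Λ * Uᴴ) =
      U * (Λ - Λ * S * (Sᴴ * Λ * S + B)⁻¹ * Sᴴ * Λ) * Uᴴ := by
  simp only [conjTranspose_mul, Matrix.mul_assoc]
  simp only [← Matrix.mul_assoc Uᴴ U, hU, Matrix.one_mul, Matrix.mul_sub, Matrix.sub_mul,
    Matrix.mul_assoc]

theorem mul_inv_eq_inv_mul_of_mul_eq_mul {R : Type*} [CommRing R] [DecidableEq m]
    [DecidableEq n] {S : Matrix m n R} {X : Matrix n n R} {Y : Matrix m m R}
    (hX : IsUnit X.det) (hY : IsUnit Y.det) (h : Y * S = S * X) : S * X⁻¹ = Y⁻¹ * S :=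
  calc S * X⁻¹ = Y⁻¹ * (Y * S) * X⁻¹ := by
        rw [← Matrix.mul_assoc, nonsing_inv_mul _ hY, Matrix.one_mul]
    _ = Y⁻¹ * S := by
        rw [h, Matrix.mul_assoc, Matrix.mul_assoc, mul_nonsing_inv _ hX, Matrix.mul_one]

omit [Fintype m] in
theorem mul_conjTranspose_eq_diagonal_card_of_selection {R : Type*} [Semiring R] [StarRing R]
    [DecidableEq m] (sel : n → m) {S : Matrix m n R}
    (hS : ∀ i j, S i j = if sel j = i then 1 else 0) :
    S * Sᴴ = diagonal fun i => ((Finset.univ.filter fun j => sel j = i).card : R) := by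
  ext i i'
  simp only [mul_apply, conjTranspose_apply, hS, diagonal_apply, apply_ite star, star_one,
    star_zero, mul_ite, mul_one, mul_zero]
  split_ifs with h
  · subst h
    simp +contextual [Finset.sum_boole]
  · exact Finset.sum_eq_zero fun j _ => by grind

theorem diagonal_sub_mul_inv_mul_of_mul_conjTranspose_eq_diagonal [DecidableEq m]
    [DecidableEq n] {S : Matrix m n ℂ} {d : m → ℝ} (hS : S * Sᴴ = diagonal fun i => (d i : ℂ))
    {lam : m → ℝ} (hlam : ∀ i, 0 ≤ lam i) {σ2 : ℝ} (hσ : 0 < σ2) :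
    diagonal (fun i => (lam i : ℂ)) - diagonal (fun i => (lam i : ℂ)) * S *
        (Sᴴ * diagonal (fun i => (lam i : ℂ)) * S + (σ2 : ℂ) • 1)⁻¹ * Sᴴ *
        diagonal (fun i => (lam i : ℂ)) =
      diagonal fun i => ((lam i * σ2 / (d i * lam i + σ2) : ℝ) : ℂ) := by
  set Λ : Matrix m m ℂ := diagonal fun i => (lam i : ℂ)
  set X := Sᴴ * Λ * S + (σ2 : ℂ) • 1
  set Y : Matrix m m ℂ := diagonal fun i => (d i : ℂ) * lam i + σ2
  have hd (i : m) : 0 ≤ d i := by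
    simpa [hS] using (posSemidef_self_mul_conjTranspose S).diag_nonneg (i := i)
  have hY_diag_ne_zero (i : m) : (d i : ℂ) * lam i + σ2 ≠ 0 := by
    have := mul_nonneg (hd i) (hlam i)
    exact_mod_cast (by positivity : d i * lam i + σ2 ≠ 0)
  have hX : IsUnit X.det := by
    have hΛ : Λ.PosSemidef := .diagonal fun i => by simpa using hlam i
    have hσ1 : ((σ2 : ℂ) • (1 : Matrix n n ℂ)).PosDef := PosDef.one.smul (by simpa using hσ)
    exact (isUnit_iff_isUnit_det X).mp
      (PosDef.posSemidef_add (hΛ.conjTranspose_mul_mul_same S) hσ1).isUnit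
  have hYS : Y * S = S * X := by
    have hY : Y = S * Sᴴ * Λ + (σ2 : ℂ) • 1 := by
      rw [hS, diagonal_mul_diagonal, smul_one_eq_diagonal, diagonal_add]
    rw [hY, Matrix.add_mul, Matrix.mul_add]
    simp [Matrix.mul_assoc]
  have hY_inv_mul : (diagonal fun i => ((d i : ℂ) * lam i + σ2)⁻¹) * Y = 1 := by
    rw [diagonal_mul_diagonal, ← diagonal_one]
    congr 1
    funext i
    exact inv_mul_cancel₀ (hY_diag_ne_zero i)
  calc Λ - Λ * S * X⁻¹ * Sᴴ * Λ = Λ - Λ * Y⁻¹ * (S * Sᴴ) * Λ := by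
        rw [Matrix.mul_assoc Λ S, mul_inv_eq_inv_mul_of_mul_eq_mul hX
          (isUnit_det_of_left_inverse hY_inv_mul) hYS]
        simp only [Matrix.mul_assoc]
    _ = _ := by
        rw [hS, inv_eq_left_inv hY_inv_mul]
        simp only [Λ, diagonal_mul_diagonal, diagonal_sub]
        congr 1
        funext i
        push_cast
        rw [eq_div_iff (hY_diag_ne_zero i)]
        linear_combination (-(lam i : ℂ) ^ 2 * d i) * inv_mul_cancel₀ (hY_diag_ne_zero i)

end Matrix

theorem stmt7_general {M K Q : ℕ}
    (U : Matrix (Fin M) (Fin K) ℂ) (hU : Uᴴ * U = 1)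
    (lam : Fin K → ℝ) (hlam : ∀ k, 0 < lam k)
    (σ2 : ℝ) (hσ : 0 < σ2)
    (Sh : Matrix (Fin M) (Fin M) ℂ)
    (hSh : Sh = U * Matrix.diagonal (fun k => (lam k : ℂ)) * Uᴴ)
    (sel : Fin Q → Fin K)
    (S : Matrix (Fin K) (Fin Q) ℂ)
    (hS : ∀ k q, S k q = if sel q = k then 1 else 0)
    (n : Fin K → ℕ)
    (hn : ∀ k, n k = (Finset.univ.filter fun q => sel q = k).card)
    (W : Matrix (Fin M) (Fin Q) ℂ) (hW : W = U * S) :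
    (Sh - Sh * W * (Wᴴ * Sh * W + (σ2 : ℂ) • 1)⁻¹ * Wᴴ * Sh).trace =
      ((∑ k, lam k * σ2 / (n k * lam k + σ2) : ℝ) : ℂ) := by
  have hSS : S * Sᴴ = diagonal fun k => ((n k : ℝ) : ℂ) := by
    rw [mul_conjTranspose_eq_diagonal_card_of_selection sel hS]
    simp [hn]
  subst hSh hW
  rw [sub_mul_inv_mul_conj_of_conjTranspose_mul_self_eq_one hU,
    trace_mul_mul_conjTranspose_of_conjTranspose_mul_self_eq_one hU,
    diagonal_sub_mul_inv_mul_of_mul_conjTranspose_eq_diagonal hSS (fun k => (hlam k).le) hσ,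
    trace_diagonal, Complex.ofReal_sum]

/-- with `Σ_h = U_K Λ_K U_Kᴴ` and `W = U_K S` for a 0-1 selection matrix `S`
with exactly one `1` per column (column `q` selecting row `sel q`), and `n_k` the number of
`1`'s in row `k`, the trace of `Σ_h - Σ_h W (Wᴴ Σ_h W + σ² I_Q)⁻¹ Wᴴ Σ_h` equals
`∑_k λ_k σ²/(n_k λ_k + σ²)`. -/
theorem stmt7 {M K Q : ℕ} (hK : 0 < K) (hQ : 0 < Q)
    (U : Matrix (Fin M) (Fin K) ℂ) (hU : Uᴴ * U = 1)
    (lam : Fin K → ℝ) (hlam : ∀ k, 0 < lam k)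
    (σ2 : ℝ) (hσ : 0 < σ2)
    (Sh : Matrix (Fin M) (Fin M) ℂ)
    (hSh : Sh = U * Matrix.diagonal (fun k => (lam k : ℂ)) * Uᴴ)
    (sel : Fin Q → Fin K)
    (S : Matrix (Fin K) (Fin Q) ℂ)
    (hS : ∀ k q, S k q = if sel q = k then 1 else 0)
    (n : Fin K → ℕ)
    (hn : ∀ k, n k = (Finset.univ.filter fun q => sel q = k).card)
    (W : Matrix (Fin M) (Fin Q) ℂ) (hW : W = U * S) :
    (Sh - Sh * W * (Wᴴ * Sh * W + (σ2 : ℂ) • 1)⁻¹ * Wᴴ * Sh).trace =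
      ((∑ k, lam k * σ2 / (n k * lam k + σ2) : ℝ) : ℂ) :=
  stmt7_general U hU lam hlam σ2 hσ Sh hSh sel S hS n hn W hW
end

section
/- For any M×Q complex matrix W, positive definite Hermitian Σ̂ ∈ ℂ^{M×M}, and σ² > 0, it holds that W (Wᴴ Σ̂ W + σ² I_Q)⁻¹ Wᴴ Σ̂ = (WWᴴ/σ² - (WWᴴ/σ⁴)(Σ̂⁻¹ + WWᴴ/σ²)⁻¹ WWᴴ) Σ̂; i.e., WΠ depends on W only through WWᴴ. -/
/-!
With `G = W Wᴴ`, the push-through identity `W (Wᴴ S W + σ²)⁻¹ = (G S + σ²)⁻¹ W` rewrites the left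
side as `(G S + σ²)⁻¹ G S`, and the Woodbury identity for `σ² I + G S I` (so `A = σ² I`, `U = G`,
`C = S`, `V = I`) expands `(G S + σ²)⁻¹ G` into the stated form. The inverses involved exist
because `Wᴴ S W + σ²` and `S⁻¹ + G / σ²` are positive definite.
-/

open Matrix ComplexOrder

namespace Matrix

variable {m n α : Type*} [Fintype m] [Fintype n] [DecidableEq m] [DecidableEq n]

theorem mul_inv_mul_add_smul_one [CommRing α] (A : Matrix m n α) (B : Matrix n m α) (c : α)
    (hBA : IsUnit (B * A + c • 1)) (hAB : IsUnit (A * B + c • 1)) :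
    A * (B * A + c • 1)⁻¹ = (A * B + c • 1)⁻¹ * A := by
  have hcomm : (A * B + c • 1) * A = A * (B * A + c • 1) := by
    simp [Matrix.add_mul, Matrix.mul_add, Matrix.mul_assoc]
  rw [isUnit_iff_isUnit_det] at hBA hAB
  calc A * (B * A + c • 1)⁻¹
      = (A * B + c • 1)⁻¹ * ((A * B + c • 1) * A) * (B * A + c • 1)⁻¹ := by
        rw [nonsing_inv_mul_cancel_left _ _ hAB]
    _ = (A * B + c • 1)⁻¹ * A := by
        rw [hcomm, ← Matrix.mul_assoc, mul_nonsing_inv_cancel_right _ _ hBA]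

section Field

variable [Field α] (G S : Matrix m m α) {s : α}

theorem isUnit_mul_add_smul_one (hs : s ≠ 0) (hS : IsUnit S) (hB : IsUnit (S⁻¹ + s⁻¹ • G)) :
    IsUnit (G * S + s • 1) := by
  have hfactor : G * S + s • 1 = s • ((S⁻¹ + s⁻¹ • G) * S) := by
    rw [Matrix.add_mul, nonsing_inv_mul S ((isUnit_iff_isUnit_det S).mp hS), smul_add,
      smul_mul_assoc, smul_smul, mul_inv_cancel₀ hs, one_smul, add_comm]
  rw [hfactor]
  exact (hB.mul hS).smul (Units.mk0 s hs)

theorem inv_mul_add_smul_one_mul (hs : s ≠ 0) (hS : IsUnit S) (hB : IsUnit (S⁻¹ + s⁻¹ • G)) :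
    (G * S + s • 1)⁻¹ * G = s⁻¹ • G - (s ^ 2)⁻¹ • (G * (S⁻¹ + s⁻¹ • G)⁻¹ * G) := by
  have hs1 : (s • 1 : Matrix m m α) * (s⁻¹ • 1) = 1 := by simp [smul_smul, hs]
  have hinv : (s • 1 : Matrix m m α)⁻¹ = s⁻¹ • 1 := inv_eq_right_inv hs1
  have woodbury := add_mul_mul_inv_eq_sub (s • 1) G S 1 (.of_mul_eq_one _ hs1) hS
    (by simpa [hinv] using hB)
  rw [add_comm, ← Matrix.mul_one (G * S), woodbury]
  simp [hinv, Matrix.sub_mul, smul_smul, sq]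

end Field

end Matrix

/-- for any `W ∈ ℂ^{M×Q}`, positive definite Hermitian `Σ̂` and `σ² > 0`,
`W (Wᴴ Σ̂ W + σ² I_Q)⁻¹ Wᴴ Σ̂ = (WWᴴ/σ² - (WWᴴ/σ⁴)(Σ̂⁻¹ + WWᴴ/σ²)⁻¹ WWᴴ) Σ̂`;
i.e. `W Π` depends on `W` only through `W Wᴴ`. -/
theorem stmt10 {M Q : ℕ} (W : Matrix (Fin M) (Fin Q) ℂ)
    (S : Matrix (Fin M) (Fin M) ℂ) (hS : S.PosDef) (σ2 : ℝ) (hσ : 0 < σ2) :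
    W * (Wᴴ * S * W + (σ2 : ℂ) • 1)⁻¹ * Wᴴ * S =
      ((σ2 : ℂ)⁻¹ • (W * Wᴴ) -
        (((σ2 : ℂ) ^ 2)⁻¹) • (W * Wᴴ * (S⁻¹ + (σ2 : ℂ)⁻¹ • (W * Wᴴ))⁻¹ * (W * Wᴴ))) * S := by
  set s : ℂ := (σ2 : ℂ)
  have hs : 0 < s := by positivity
  have hA : IsUnit (Wᴴ * S * W + s • 1) :=
    (PosDef.posSemidef_add (hS.posSemidef.conjTranspose_mul_mul_same W)
      (PosDef.one.smul hs)).isUnit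
  have hB : IsUnit (S⁻¹ + s⁻¹ • (W * Wᴴ)) :=
    (hS.inv.add_posSemidef ((posSemidef_self_mul_conjTranspose W).smul (inv_pos.mpr hs).le)).isUnit
  have hC : IsUnit (W * (Wᴴ * S) + s • 1) := by
    simpa only [Matrix.mul_assoc] using isUnit_mul_add_smul_one (W * Wᴴ) S hs.ne' hS.isUnit hB
  calc W * (Wᴴ * S * W + s • 1)⁻¹ * Wᴴ * S
      = (W * (Wᴴ * S * W + s • 1)⁻¹) * (Wᴴ * S) := by simp only [Matrix.mul_assoc]
    _ = (W * Wᴴ * S + s • 1)⁻¹ * (W * Wᴴ) * S := by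
        rw [mul_inv_mul_add_smul_one W (Wᴴ * S) s hA hC]
        simp only [Matrix.mul_assoc]
    _ = _ := by rw [inv_mul_add_smul_one_mul (W * Wᴴ) S hs.ne' hS.isUnit hB]
end
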